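/- Let T be a bicolored tree and let T' be obtained from T by replacing each vertex v with p > 2 children v_1,...,v_p by v together with a path of p−2 new uncolored vertices so that each vertex of T' has at most 2 children (the standard binarization). Then for every vertex v of T and integer k, T has a balanced connected subtree of size 2k containing v as its topmost vertex if and only if T' has a connected subgraph containing v as its topmost vertex with exactly k blue and k red vertices. -/

import Mathlib

/-- A finite rooted tree, each vertex colored blue (`true`) or red (`false`). -/
inductive RTree : Type
  | node (c : Bool) (children : List RTree)

/-- A finite rooted tree, each vertex colored blue (`some true`), red (`some false`)
or uncolored (`none`). -/
inductive OTree : Type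
  | node (c : Option Bool) (children : List OTree)

/-- Standard binarization of a list of children: a list `[t₁,…,t_p]` with `p > 2`
is replaced by `[t₁, u]` where the uncolored vertex `u` has children obtained by
binarizing `[t₂,…,t_p]`; lists of length `≤ 2` are kept as they are. -/
def chain : List OTree → List OTree
  | [] => []
  | [t] => [t]
  | [t₁, t₂] => [t₁, t₂]
  | t :: rest => [t, OTree.node none (chain rest)]

/-- The standard binarization `T'` of a rooted tree `T`: every vertex keeps its
color and its list of children is binarized, so every vertex of the result has
at most two children. -/
def binarize : RTree → OTree
  | .node c cs => .node (some c) (chain (cs.attach.map fun x => binarize x.1))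
decreasing_by
  have := List.sizeOf_lt_of_mem x.2
  simp only [RTree.node.sizeOf_spec]
  omega

mutual
/-- `HasSub t b r` : the tree `t` has a connected subtree containing its root
(its "topmost vertex") with exactly `b` blue and `r` red vertices. -/
inductive HasSub : RTree → ℕ → ℕ → Prop
  | node {c : Bool} {cs : List RTree} {b r : ℕ} : SubChoice cs b r →
      HasSub (.node c cs) (b + (if c then 1 else 0)) (r + (if c then 0 else 1))
/-- `SubChoice cs b r` : from each tree in the list `cs` one may take either
nothing or a connected subtree containing its root, for a total of `b` blue
and `r` red vertices. -/
inductive SubChoice : List RTree → ℕ → ℕ → Prop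
  | nil : SubChoice [] 0 0
  | skip {t ts b r} : SubChoice ts b r → SubChoice (t :: ts) b r
  | take {t ts b₁ r₁ b₂ r₂} : HasSub t b₁ r₁ → SubChoice ts b₂ r₂ →
      SubChoice (t :: ts) (b₁ + b₂) (r₁ + r₂)
end

mutual
/-- `OHasSub t b r` : the (partially colored) tree `t` has a connected subtree
containing its root with exactly `b` blue and `r` red vertices. -/
inductive OHasSub : OTree → ℕ → ℕ → Prop
  | node {c : Option Bool} {cs : List OTree} {b r : ℕ} : OSubChoice cs b r →
      OHasSub (.node c cs) (b + (if c = some true then 1 else 0))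
        (r + (if c = some false then 1 else 0))
/-- Choices of rooted subtrees from a list of partially colored trees. -/
inductive OSubChoice : List OTree → ℕ → ℕ → Prop
  | nil : OSubChoice [] 0 0
  | skip {t ts b r} : OSubChoice ts b r → OSubChoice (t :: ts) b r
  | take {t ts b₁ r₁ b₂ r₂} : OHasSub t b₁ r₁ → OSubChoice ts b₂ r₂ →
      OSubChoice (t :: ts) (b₁ + b₂) (r₁ + r₂)
end

/-!
An uncolored vertex adds nothing to the counts, so a rooted subtree of the new vertex `u`
in `[t₁, u]` is exactly a choice of rooted subtrees of the children of `u`, where the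
empty choice plays the role of omitting `u`. Hence choosing from `chain [t₁, …, t_p]` is
the same as choosing from `[t₁, …, t_p]`, and the equivalence follows by induction on `T`.
-/

lemma binarize_node (c : Bool) (cs : List RTree) :
    binarize (.node c cs) = .node (some c) (chain (cs.map binarize)) := by
  rw [binarize, List.attach_map_val]

namespace OSubChoice

lemma zero : ∀ ts : List OTree, OSubChoice ts 0 0
  | [] => .nil
  | _ :: ts => .skip (zero ts)

lemma cons_mono {t : OTree} {ts ts' : List OTree}
    (h : ∀ b r, OSubChoice ts b r → OSubChoice ts' b r) {b r : ℕ} :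
    OSubChoice (t :: ts) b r → OSubChoice (t :: ts') b r
  | .skip hs => .skip (h _ _ hs)
  | .take ht hs => .take ht (h _ _ hs)

lemma singleton_node_none_iff {ts : List OTree} {b r : ℕ} :
    OSubChoice [.node none ts] b r ↔ OSubChoice ts b r := by
  constructor
  · intro h
    cases h with
    | skip h => cases h; exact zero ts
    | take hu h => cases h; cases hu with | node hs => simpa using hs
  · intro hs
    simpa using OSubChoice.take (OHasSub.node (c := none) hs) .nil

lemma chain_iff : ∀ (ts : List OTree) (b r : ℕ), OSubChoice (chain ts) b r ↔ OSubChoice ts b r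
  | [], _, _ | [_], _, _ | [_, _], _, _ => by rw [chain]
  | t :: t₂ :: t₃ :: rest, b, r => by
    have ih (b r : ℕ) :
        OSubChoice [.node none (chain (t₂ :: t₃ :: rest))] b r ↔ OSubChoice (t₂ :: t₃ :: rest) b r :=
      singleton_node_none_iff.trans (chain_iff _ b r)
    show OSubChoice (t :: [.node none (chain (t₂ :: t₃ :: rest))]) b r ↔ _
    exact ⟨cons_mono fun b r => (ih b r).mp, cons_mono fun b r => (ih b r).mpr⟩

end OSubChoice

mutual

theorem hasSub_iff_oHasSub_binarize :
    ∀ (t : RTree) (b r : ℕ), HasSub t b r ↔ OHasSub (binarize t) b r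
  | .node c cs, b, r => by
    rw [binarize_node]
    constructor
    · rintro ⟨hs⟩
      have := OHasSub.node (c := some c)
        ((OSubChoice.chain_iff _ _ _).mpr ((subChoice_iff_oSubChoice_map_binarize cs _ _).mp hs))
      cases c <;> simpa using this
    · rintro ⟨hs⟩
      have := HasSub.node (c := c)
        ((subChoice_iff_oSubChoice_map_binarize cs _ _).mpr ((OSubChoice.chain_iff _ _ _).mp hs))
      cases c <;> simpa using this

theorem subChoice_iff_oSubChoice_map_binarize :
    ∀ (cs : List RTree) (b r : ℕ), SubChoice cs b r ↔ OSubChoice (cs.map binarize) b r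
  | [], b, r => by
    rw [List.map_nil]
    constructor <;> rintro ⟨⟩ <;> exact .nil
  | t :: ts, b, r => by
    rw [List.map_cons]
    constructor
    · intro h
      cases h with
      | skip hs => exact .skip ((subChoice_iff_oSubChoice_map_binarize ts _ _).mp hs)
      | take ht hs =>
        exact .take ((hasSub_iff_oHasSub_binarize t _ _).mp ht)
          ((subChoice_iff_oSubChoice_map_binarize ts _ _).mp hs)
    · intro h
      cases h with
      | skip hs => exact .skip ((subChoice_iff_oSubChoice_map_binarize ts _ _).mpr hs)
      | take ht hs =>
        exact .take ((hasSub_iff_oHasSub_binarize t _ _).mpr ht)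
          ((subChoice_iff_oSubChoice_map_binarize ts _ _).mpr hs)

end

/-- for every vertex `v` of a bicolored tree `T` (equivalently, for
every rooted subtree `t` of `T`) and every `k`, `T` has a balanced connected
subtree of size `2k` with topmost vertex `v` (i.e. `k` blue and `k` red vertices)
iff the binarization `T'` has a connected subgraph with topmost vertex `v`
having exactly `k` blue and `k` red vertices. -/
theorem stmt_3 (t : RTree) (k : ℕ) :
    HasSub t k k ↔ OHasSub (binarize t) k k :=
  hasSub_iff_oHasSub_binarize t k k
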